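/- For any disjoint sets of atoms B_1, B_2 ⊆ σ, any interpretation I, and any infinitary propositional formula F over σ: if B_2 is disjoint from Pnn(F) and I \ B_1 satisfies F^I, then I \ (B_1 ∪ B_2) satisfies F^I. -/

import Mathlib

/-- Infinitary propositional formulas over signature `σ`:
atoms, conjunctions and disjunctions of (index-)sets of formulas, implication. -/
inductive Formula (σ : Type) : Type 1
  | atom : σ → Formula σ
  | conj : (ι : Type) → (ι → Formula σ) → Formula σ
  | disj : (ι : Type) → (ι → Formula σ) → Formula σ
  | imp : Formula σ → Formula σ → Formula σ

namespace Formula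

variable {σ : Type}

/-- `⊥` is the empty disjunction. -/
def bot : Formula σ := Formula.disj Empty (fun e => e.elim)

/-- Binary conjunction `F ∧ G`. -/
def and (F G : Formula σ) : Formula σ := Formula.conj Bool (fun b => if b then F else G)

/-- Binary disjunction `F ∨ G`. -/
def or (F G : Formula σ) : Formula σ := Formula.disj Bool (fun b => if b then F else G)

/-- Negation `¬F` abbreviates `F → ⊥`. -/
def neg (F : Formula σ) : Formula σ := Formula.imp F bot

/-- Conjunction of a set of atoms. -/
def conjAtoms (S : Set σ) : Formula σ := Formula.conj S (fun p => Formula.atom p.val)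

/-- Satisfaction of an infinitary formula by an interpretation `I ⊆ σ`. -/
def Sat (I : Set σ) : Formula σ → Prop
  | .atom p => p ∈ I
  | .conj _ f => ∀ i, Sat I (f i)
  | .disj _ f => ∃ i, Sat I (f i)
  | .imp F G => Sat I F → Sat I G

open Classical in
/-- The reduct `F^I`. -/
noncomputable def reduct (I : Set σ) : Formula σ → Formula σ
  | .atom p => if p ∈ I then Formula.atom p else bot
  | .conj ι f => Formula.conj ι (fun i => reduct I (f i))
  | .disj ι f => Formula.disj ι (fun i => reduct I (f i))
  | .imp F G => if Sat I (Formula.imp F G) then Formula.imp (reduct I F) (reduct I G) else bot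

/-- `I` is an `A`-stable model of `F`: `I` is minimal w.r.t. `≤_A`
(`J ≤_A I` iff `J ⊆ I` and `I \ J ⊆ A`) among interpretations satisfying `F^I`. -/
def AStable (A : Set σ) (I : Set σ) (F : Formula σ) : Prop :=
  Sat I (reduct I F) ∧ ∀ J : Set σ, J ⊆ I → I \ J ⊆ A → Sat J (reduct I F) → J = I

/-- A stable model is a `σ`-stable model. -/
def Stable (I : Set σ) (F : Formula σ) : Prop := AStable Set.univ I F

/-- The strictly positive atoms `P(F)`. -/
def spos : Formula σ → Set σ
  | .atom p => {p}
  | .conj _ f => ⋃ i, spos (f i)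
  | .disj _ f => ⋃ i, spos (f i)
  | .imp _ H => spos H

/-- `F` is (syntactically) the formula `⊥`, i.e. an empty disjunction. -/
def IsBot : Formula σ → Prop
  | .disj ι _ => IsEmpty ι
  | _ => False

open Classical in
mutual
/-- Positive nonnegated atoms `Pnn(F)`. -/
noncomputable def pnn : Formula σ → Set σ
  | .atom p => {p}
  | .conj _ f => ⋃ i, pnn (f i)
  | .disj _ f => ⋃ i, pnn (f i)
  | .imp G H => if IsBot H then ∅ else nnn G ∪ pnn H

/-- Negative nonnegated atoms `Nnn(F)`. -/
noncomputable def nnn : Formula σ → Set σ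
  | .atom _ => ∅
  | .conj _ f => ⋃ i, nnn (f i)
  | .disj _ f => ⋃ i, nnn (f i)
  | .imp G H => if IsBot H then ∅ else pnn G ∪ nnn H
end

/-- The rules of a formula, as antecedent/consequent pairs. -/
def rules : Formula σ → Set (Formula σ × Formula σ)
  | .atom _ => ∅
  | .conj _ f => ⋃ i, rules (f i)
  | .disj _ f => ⋃ i, rules (f i)
  | .imp G H => insert (G, H) (rules H)

/-- Edge relation of the positive dependency graph `DG_A[F]` (vertex set `A`). -/
noncomputable def DGEdge (F : Formula σ) (A : Set σ) (p q : σ) : Prop :=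
  p ∈ A ∧ q ∈ A ∧ ∃ R ∈ rules F, p ∈ spos R.2 ∧ q ∈ pnn R.1

/-- The atoms occurring in a formula. -/
def atoms : Formula σ → Set σ
  | .atom p => {p}
  | .conj _ f => ⋃ i, atoms (f i)
  | .disj _ f => ⋃ i, atoms (f i)
  | .imp G H => atoms G ∪ atoms H

/-- `G` is a definition for the set `Q` of atoms: a conjunction of formulas
`H ∧ C^∧ → q` with `q ∈ Q`, `C ⊆ Q`, and no atom of `Q` occurring in `H`. -/
def IsDefinition (Q : Set σ) (G : Formula σ) : Prop :=
  ∃ (ι : Type) (g : ι → Formula σ), G = Formula.conj ι g ∧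
    ∀ i, ∃ (H : Formula σ) (C : Set σ) (q : σ),
      q ∈ Q ∧ C ⊆ Q ∧ (∀ p ∈ Q, p ∉ atoms H) ∧
      g i = Formula.imp (Formula.and H (conjAtoms C)) (Formula.atom q)

end Formula

section Graph

variable {V : Type*}

/-- An infinite walk in the directed graph with edge relation `E`. -/
def IsInfWalk (E : V → V → Prop) (w : ℕ → V) : Prop := ∀ i, E (w i) (w (i + 1))

/-- The partition `{P₁, P₂}` is infinitely separable: every infinite walk
visits `P₁` or `P₂` only finitely often. -/
def InfSeparable (E : V → V → Prop) (P1 P2 : Set V) : Prop :=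
  ∀ w : ℕ → V, IsInfWalk E w → {i | w i ∈ P1}.Finite ∨ {i | w i ∈ P2}.Finite

/-- `u` and `v` are in the same strongly connected component:
each is reachable from the other. -/
def SameSCC (E : V → V → Prop) (u v : V) : Prop :=
  Relation.ReflTransGen E u v ∧ Relation.ReflTransGen E v u

/-- The partition `{P₁, P₂}` is separable: every strongly connected
component is contained in `P₁` or in `P₂`. -/
def Separable (E : V → V → Prop) (P1 P2 : Set V) : Prop :=
  ∀ u v, SameSCC E u v → ((u ∈ P1 ∧ v ∈ P1) ∨ (u ∈ P2 ∧ v ∈ P2))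

end Graph

namespace Formula

variable {σ : Type}

theorem not_sat_bot (J : Set σ) : ¬ Sat J (bot : Formula σ) :=
  fun ⟨e, _⟩ => e.elim

theorem sat_of_sat_reduct {I J : Set σ} (hJI : J ⊆ I) :
    ∀ {F : Formula σ}, Sat J (reduct I F) → Sat I F
  | .atom p, h => by
    by_cases hp : p ∈ I
    · exact hp
    · simp only [reduct, if_neg hp] at h
      exact (not_sat_bot J h).elim
  | .conj _ _, h => fun i => sat_of_sat_reduct hJI (h i)
  | .disj _ _, h => let ⟨i, hi⟩ := h; ⟨i, sat_of_sat_reduct hJI hi⟩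
  | .imp G H, h => by
    by_cases hGH : Sat I (.imp G H)
    · exact hGH
    · simp only [reduct, if_neg hGH] at h
      exact (not_sat_bot J h).elim

theorem IsBot.not_sat {H : Formula σ} (hH : IsBot H) (J : Set σ) : ¬ Sat J H := by
  cases H with
  | disj _ _ => exact fun ⟨i, _⟩ => hH.false i
  | _ => exact hH.elim

theorem pnn_imp_of_not_isBot {G H : Formula σ} (hH : ¬ IsBot H) :
    pnn (.imp G H) = nnn G ∪ pnn H := by
  rw [pnn, if_neg hH]

theorem nnn_imp_of_not_isBot {G H : Formula σ} (hH : ¬ IsBot H) :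
    nnn (.imp G H) = pnn G ∪ nnn H := by
  rw [nnn, if_neg hH]

/-- The two halves are proved together because the antecedent of an implication swaps them. -/
theorem sat_reduct_shrink_grow {I J K : Set σ} (hJK : J ⊆ K) (hKI : K ⊆ I) (F : Formula σ) :
    (Disjoint (K \ J) (pnn F) → Sat K (reduct I F) → Sat J (reduct I F)) ∧
    (Disjoint (K \ J) (nnn F) → Sat J (reduct I F) → Sat K (reduct I F)) := by
  induction F with
  | atom p =>
    by_cases hp : p ∈ I
    · simp only [reduct, if_pos hp, Sat]
      refine ⟨fun hdisj hpK => ?_, fun _ hpJ => hJK hpJ⟩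
      by_contra hpJ
      exact Set.disjoint_left.mp hdisj ⟨hpK, hpJ⟩ (Set.mem_singleton p)
    · simp only [reduct, if_neg hp]
      exact ⟨fun _ h => (not_sat_bot K h).elim, fun _ h => (not_sat_bot J h).elim⟩
  | conj ι f ih =>
    simp only [pnn, nnn, reduct, Sat, Set.disjoint_iUnion_right]
    exact ⟨fun hdisj h i => (ih i).1 (hdisj i) (h i), fun hdisj h i => (ih i).2 (hdisj i) (h i)⟩
  | disj ι f ih =>
    simp only [pnn, nnn, reduct, Sat, Set.disjoint_iUnion_right]
    exact ⟨fun hdisj ⟨i, hi⟩ => ⟨i, (ih i).1 (hdisj i) hi⟩,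
      fun hdisj ⟨i, hi⟩ => ⟨i, (ih i).2 (hdisj i) hi⟩⟩
  | imp G H ihG ihH =>
    by_cases hGH : Sat I (.imp G H)
    swap
    · simp only [reduct, if_neg hGH]
      exact ⟨fun _ h => (not_sat_bot K h).elim, fun _ h => (not_sat_bot J h).elim⟩
    simp only [reduct, if_pos hGH]
    by_cases hH : IsBot H
    · have hIG : ¬ Sat I G := fun hG => hH.not_sat I (hGH hG)
      exact ⟨fun _ _ hG => (hIG (sat_of_sat_reduct (hJK.trans hKI) hG)).elim,
        fun _ _ hG => (hIG (sat_of_sat_reduct hKI hG)).elim⟩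
    rw [pnn_imp_of_not_isBot hH, nnn_imp_of_not_isBot hH,
      Set.disjoint_union_right, Set.disjoint_union_right]
    exact ⟨fun ⟨hdisjG, hdisjH⟩ h hJG => ihH.1 hdisjH (h (ihG.2 hdisjG hJG)),
      fun ⟨hdisjG, hdisjH⟩ h hKG => ihH.2 hdisjH (h (ihG.1 hdisjG hKG))⟩

end Formula

/-- if `B₁, B₂` are disjoint, `B₂` is disjoint from `Pnn(F)`,
and `I \ B₁ ⊨ F^I`, then `I \ (B₁ ∪ B₂) ⊨ F^I`. -/
theorem sat_reduct_remove_pnn_disjoint {σ : Type} (B1 B2 : Set σ)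
    (hB : Disjoint B1 B2) (I : Set σ) (F : Formula σ)
    (hpnn : Disjoint B2 (Formula.pnn F))
    (h : Formula.Sat (I \ B1) (Formula.reduct I F)) :
    Formula.Sat (I \ (B1 ∪ B2)) (Formula.reduct I F) := by
  have hremoved : (I \ B1) \ (I \ (B1 ∪ B2)) ⊆ B2 := by
    rintro p ⟨⟨hpI, hpB1⟩, hpJ⟩
    by_contra hpB2
    exact hpJ ⟨hpI, fun hp => hp.elim hpB1 hpB2⟩
  exact (Formula.sat_reduct_shrink_grow (Set.sdiff_subset_sdiff_right Set.subset_union_left)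
    Set.sdiff_subset F).1 (hpnn.mono_left hremoved) h
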